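/- Let E = [[√6/6, −√2/2], [√6/6, √2/2]] ∈ ℝ^{2×2} and v = [−√6/3, 0] ∈ ℝ^{1×2}. For even m ≥ 2, let X̃_m ∈ ℝ^{(3m/2)×m} be the block matrix with m/2 diagonal copies of E stacked above m/2 diagonal copies of v. Then X̃_mᵀ X̃_m = I_m (the m×m identity) and every column of X̃_m sums to zero. -/

import Mathlib

/-!
After reordering rows and columns, `X̃` is `E` repeated along the block diagonal stacked above
`v` repeated along the block diagonal. Hence `X̃ᵀ X̃` is block diagonal with blocks
`EᵀE + vᵀv = I₂`, and each column sum of `X̃` is a column sum of `E` plus the matching entry of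
`v`, which vanishes.
-/

open Matrix Finset

/-- The matrix `X̃_m` for even `m = 2k`: `k` diagonal blocks of
`E = [[√6/6, −√2/2], [√6/6, √2/2]]` (rows `0,…,2k−1`) stacked above `k`
diagonal blocks of `v = [−√6/3, 0]` (rows `2k,…,3k−1`). -/
noncomputable def XtildeEven (k : ℕ) : Matrix (Fin (3 * k)) (Fin (2 * k)) ℝ :=
  Matrix.of fun i j =>
    if (i : ℕ) < 2 * k then
      -- E blocks
      if (j : ℕ) / 2 = (i : ℕ) / 2 then
        if (j : ℕ) % 2 = 0 then Real.sqrt 6 / 6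
        else if (i : ℕ) % 2 = 0 then -(Real.sqrt 2 / 2) else Real.sqrt 2 / 2
      else 0
    else
      -- v blocks
      if (j : ℕ) = 2 * ((i : ℕ) - 2 * k) then -(Real.sqrt 6 / 3) else 0

section BlockStack

variable {R ι m n l : Type*} [Fintype ι] [DecidableEq ι] [Fintype m] [Fintype l]

def blockStack (ι : Type*) [DecidableEq ι] [Zero R] (E : Matrix m n R) (v : Matrix l n R) :
    Matrix ((m × ι) ⊕ (l × ι)) (n × ι) R :=
  fromRows (blockDiagonal fun _ : ι => E) (blockDiagonal fun _ : ι => v)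

theorem blockStack_transpose_mul_self [Semiring R] (E : Matrix m n R) (v : Matrix l n R) :
    (blockStack ι E v)ᵀ * blockStack ι E v = blockDiagonal fun _ => Eᵀ * E + vᵀ * v := by
  rw [blockStack, transpose_fromRows, fromCols_mul_fromRows, blockDiagonal_transpose,
    blockDiagonal_transpose, ← blockDiagonal_mul, ← blockDiagonal_mul, ← blockDiagonal_add]
  rfl

theorem sum_blockStack_apply [AddCommMonoid R] (E : Matrix m n R) (v : Matrix l n R)
    (b : n) (q : ι) :
    ∑ x, blockStack ι E v x (b, q) = ∑ a, E a b + ∑ c, v c b := by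
  simp [blockStack, Fintype.sum_sum_type, Fintype.sum_prod_type, blockDiagonal_apply]

end BlockStack

namespace XtildeEven

noncomputable def E : Matrix (Fin 2) (Fin 2) ℝ := !![√6 / 6, -(√2 / 2); √6 / 6, √2 / 2]

noncomputable def v : Matrix (Fin 1) (Fin 2) ℝ := !![-(√6 / 3), 0]

theorem E_transpose_mul_self_add_v : Eᵀ * E + vᵀ * v = 1 := by
  have h6 : √6 * √6 = 6 := Real.mul_self_sqrt (by norm_num)
  have h2 : √2 * √2 = 2 := Real.mul_self_sqrt (by norm_num)
  ext a b
  fin_cases a <;> fin_cases b <;> simp [E, v, mul_apply, Fin.sum_univ_two] <;> linarith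

theorem sum_E_apply_add_sum_v_apply (b : Fin 2) : ∑ a, E a b + ∑ c, v c b = 0 := by
  fin_cases b <;> simp [E, v, Fin.sum_univ_two]
  ring

def colEquiv (k : ℕ) : Fin 2 × Fin k ≃ Fin (2 * k) :=
  (Equiv.prodComm _ _).trans (finProdFinEquiv.trans (finCongr (Nat.mul_comm k 2)))

def rowEquiv (k : ℕ) : (Fin 2 × Fin k) ⊕ (Fin 1 × Fin k) ≃ Fin (3 * k) :=
  ((colEquiv k).sumCongr (Equiv.uniqueProd _ _)).trans
    (finSumFinEquiv.trans (finCongr (by ring)))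

theorem colEquiv_apply_val (k : ℕ) (a : Fin 2) (p : Fin k) :
    (colEquiv k (a, p) : ℕ) = a + 2 * p := by
  simp [colEquiv]

theorem rowEquiv_apply_inl_val (k : ℕ) (a : Fin 2) (p : Fin k) :
    (rowEquiv k (.inl (a, p)) : ℕ) = a + 2 * p := by
  simp [rowEquiv, colEquiv_apply_val]

theorem rowEquiv_apply_inr_val (k : ℕ) (c : Fin 1) (p : Fin k) :
    (rowEquiv k (.inr (c, p)) : ℕ) = 2 * k + p := by
  simp [rowEquiv]

theorem eq_reindex_blockStack (k : ℕ) :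
    XtildeEven k = reindex (rowEquiv k) (colEquiv k) (blockStack (Fin k) E v) := by
  ext i j
  obtain ⟨x, rfl⟩ := (rowEquiv k).surjective i
  obtain ⟨⟨b, q⟩, rfl⟩ := (colEquiv k).surjective j
  rw [reindex_apply, submatrix_apply, Equiv.symm_apply_apply, Equiv.symm_apply_apply]
  rcases x with ⟨a, p⟩ | ⟨c, p⟩
  · have hrow : (a : ℕ) + 2 * p < 2 * k := by omega
    have hblock : (b + 2 * q : ℕ) / 2 = (a + 2 * p : ℕ) / 2 ↔ p = q := by
      rw [Fin.ext_iff]; omega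
    simp only [XtildeEven, of_apply, rowEquiv_apply_inl_val, hrow, ↓reduceIte, colEquiv_apply_val,
      hblock, Nat.add_mul_mod_self_left, blockStack, fromRows_apply_inl, blockDiagonal_apply]
    fin_cases a <;> fin_cases b <;> simp [E]
  · have hcol : (b + 2 * q : ℕ) = 2 * p ↔ p = q ∧ b = 0 := by
      rw [Fin.ext_iff, Fin.ext_iff]; omega
    simp only [XtildeEven, of_apply, rowEquiv_apply_inr_val, add_lt_iff_neg_left, not_lt_zero,
      ↓reduceIte, colEquiv_apply_val, add_tsub_cancel_left, hcol, blockStack, fromRows_apply_inr,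
      blockDiagonal_apply]
    fin_cases c; fin_cases b <;> simp [v]

end XtildeEven

theorem XtildeEven_orthonormal_centered_general (k : ℕ) :
    (XtildeEven k)ᵀ * XtildeEven k = 1 ∧
      ∀ j : Fin (2 * k), ∑ i : Fin (3 * k), XtildeEven k i j = 0 := by
  rw [XtildeEven.eq_reindex_blockStack]
  refine ⟨?_, fun j => ?_⟩
  · rw [transpose_reindex, reindex_apply, reindex_apply, submatrix_mul_equiv,
      blockStack_transpose_mul_self, XtildeEven.E_transpose_mul_self_add_v, ← Pi.one_def,
      blockDiagonal_one, submatrix_one_equiv]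
  · obtain ⟨⟨b, q⟩, rfl⟩ := (XtildeEven.colEquiv k).surjective j
    rw [← (XtildeEven.rowEquiv k).sum_comp]
    simp only [reindex_apply, submatrix_apply, Equiv.symm_apply_apply]
    rw [sum_blockStack_apply, XtildeEven.sum_E_apply_add_sum_v_apply]

/-- For even `m = 2k ≥ 2`, `X̃_mᵀ X̃_m = I_m` and every column of `X̃_m`
sums to zero. -/
theorem XtildeEven_orthonormal_centered (k : ℕ) (hk : 1 ≤ k) :
    (XtildeEven k)ᵀ * XtildeEven k = 1 ∧
      ∀ j : Fin (2 * k), ∑ i : Fin (3 * k), XtildeEven k i j = 0 :=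
  XtildeEven_orthonormal_centered_general k
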